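/- arXiv:2308.06119 — 3 statements merged into one kernel-verified Lean document; each statement's English description precedes it below -/
import Mathlib

section
/- Define p_j(t) := 1 − (1/2)e^{−2εΩ_j t}, q_j(t) := (1/2)e^{−2εΩ_j t} for j = 1,2, and ρ̄(t) := diag(p₁(t)p₂(t), p₁(t)q₂(t), q₁(t)p₂(t), q₁(t)q₂(t)). Then ρ̄(0) = (1/4)I₄, and for every t ∈ ℝ the matrix-valued function ρ̄ is differentiable at t with ρ̄′(t) = −i[H₀, ρ̄(t)] + ε𝓛ᴰ_{(0,0)}(ρ̄(t)); i.e., ρ̄ is the exact solution of the two-qubit GKSL master equation with zero coherent and incoherent controls and initial state (1/4)I₄. Moreover, for every t ≥ 0, ρ̄(t) is Hermitian, positive semidefinite, and has trace 1. -/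
open Matrix Kronecker Complex
open scoped ComplexOrder

noncomputable section

/-- 4×4 complex matrices, indexed by two-qubit (tensor-product) indices
in the order (0,0), (0,1), (1,0), (1,1). -/
abbrev M4 : Type := Matrix (Fin 2 × Fin 2) (Fin 2 × Fin 2) ℂ

/-- σ⁺ = [[0,0],[1,0]]. -/
def σp : Matrix (Fin 2) (Fin 2) ℂ := !![0, 0; 1, 0]
/-- σ⁻ = [[0,1],[0,0]]. -/
def σm : Matrix (Fin 2) (Fin 2) ℂ := !![0, 1; 0, 0]
/-- σ_z = diag(1,−1). -/
def σz : Matrix (Fin 2) (Fin 2) ℂ := !![1, 0; 0, -1]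

/-- σ₁⁺ = σ⁺ ⊗ I₂. -/
def s1p : M4 := σp ⊗ₖ (1 : Matrix (Fin 2) (Fin 2) ℂ)
/-- σ₁⁻ = σ⁻ ⊗ I₂. -/
def s1m : M4 := σm ⊗ₖ (1 : Matrix (Fin 2) (Fin 2) ℂ)
/-- σ₂⁺ = I₂ ⊗ σ⁺. -/
def s2p : M4 := (1 : Matrix (Fin 2) (Fin 2) ℂ) ⊗ₖ σp
/-- σ₂⁻ = I₂ ⊗ σ⁻. -/
def s2m : M4 := (1 : Matrix (Fin 2) (Fin 2) ℂ) ⊗ₖ σm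
/-- W₁ = σ_z ⊗ I₂. -/
def W1 : M4 := σz ⊗ₖ (1 : Matrix (Fin 2) (Fin 2) ℂ)
/-- W₂ = I₂ ⊗ σ_z. -/
def W2 : M4 := (1 : Matrix (Fin 2) (Fin 2) ℂ) ⊗ₖ σz

/-- diag(a,b,c,d) as a two-qubit 4×4 matrix. -/
def diag4 (a b c d : ℂ) : M4 :=
  Matrix.diagonal fun p => ![![a, b], ![c, d]] p.1 p.2

/-- Contribution of qubit j (with lowering/raising operators sm/sp) to the
controlled GKSL dissipator: Ω[(n+1)(2σ⁻ρσ⁺ − {σ⁺σ⁻,ρ}) + n(2σ⁺ρσ⁻ − {σ⁻σ⁺,ρ})]. -/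
def dissJ (sm sp : M4) (Ω nj : ℝ) (ρ : M4) : M4 :=
  (Ω : ℂ) • (((nj : ℂ) + 1) • (2 • (sm * ρ * sp) - (sp * sm * ρ + ρ * (sp * sm)))
    + (nj : ℂ) • (2 • (sp * ρ * sm) - (sm * sp * ρ + ρ * (sm * sp))))

/-- The controlled dissipator 𝓛ᴰ_n of the two-qubit master equation. -/
def diss (Ω1 Ω2 : ℝ) (n : ℝ × ℝ) (ρ : M4) : M4 :=
  dissJ s1m s1p Ω1 n.1 ρ + dissJ s2m s2p Ω2 n.2 ρ

/-- Contribution of qubit j to the adjoint superoperator: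
Ω[(n+1)(2σ⁺χσ⁻ − {σ⁺σ⁻,χ}) + n(2σ⁻χσ⁺ − {σ⁻σ⁺,χ})]. -/
def dissAdjJ (sm sp : M4) (Ω nj : ℝ) (χ : M4) : M4 :=
  (Ω : ℂ) • (((nj : ℂ) + 1) • (2 • (sp * χ * sm) - (sp * sm * χ + χ * (sp * sm)))
    + (nj : ℂ) • (2 • (sm * χ * sp) - (sm * sp * χ + χ * (sm * sp))))

/-- The adjoint superoperator 𝓛ᴰ†_n. -/
def dissAdj (Ω1 Ω2 : ℝ) (n : ℝ × ℝ) (χ : M4) : M4 :=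
  dissAdjJ s1m s1p Ω1 n.1 χ + dissAdjJ s2m s2p Ω2 n.2 χ

/-- Free Hamiltonian H₀ = (ω₁/2)W₁ + (ω₂/2)W₂. -/
def H0 (ω1 ω2 : ℝ) : M4 := ((ω1 / 2 : ℝ) : ℂ) • W1 + ((ω2 / 2 : ℝ) : ℂ) • W2

/-- Controlled Hamiltonian H_c = H₀ + ε(Λ₁n₁W₁ + Λ₂n₂W₂) + uV,
for c = (u, n₁, n₂) : Fin 3 → ℝ. -/
def Hc (ω1 ω2 Λ1 Λ2 ε : ℝ) (V : M4) (c : Fin 3 → ℝ) : M4 :=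
  H0 ω1 ω2 + (ε : ℂ) • (((Λ1 * c 1 : ℝ) : ℂ) • W1 + ((Λ2 * c 2 : ℝ) : ℂ) • W2)
    + ((c 0 : ℝ) : ℂ) • V

/-- Hilbert–Schmidt inner product ⟨A,B⟩ = Tr(A†B). -/
def hsInner (A B : M4) : ℂ := Matrix.trace (Aᴴ * B)

/-- Coherent switching function 𝒦ᵘ(χ,ρ) = ⟨χ, −i[V,ρ]⟩ (complex form). -/
def KuC (V χ ρ : M4) : ℂ := hsInner χ ((-Complex.I) • (V * ρ - ρ * V))

/-- Incoherent switching function for qubit j: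
𝒦ⁿʲ(χ,ρ) = ⟨χ, −i[Λ_j W_j, ρ] + εΩ_j(2σ_j⁻ρσ_j⁺ + 2σ_j⁺ρσ_j⁻ − 2ρ)⟩ (complex form). -/
def KnC (sm sp Wj : M4) (Λ ε Ω : ℝ) (χ ρ : M4) : ℂ :=
  hsInner χ ((-Complex.I) • ((Λ : ℂ) • (Wj * ρ - ρ * Wj))
    + ((ε * Ω : ℝ) : ℂ) • (2 • (sm * ρ * sp) + 2 • (sp * ρ * sm) - 2 • ρ))

/-- The real switching-function vector 𝒦ᶜ(χ,ρ) = (𝒦ᵘ(χ,ρ), 𝒦ⁿ¹(χ,ρ), 𝒦ⁿ²(χ,ρ)) ∈ ℝ³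
(for Hermitian χ, ρ the values of 𝒦ᵘ, 𝒦ⁿʲ are real, so the real parts are taken). -/
def Kc (Λ1 Λ2 ε Ω1 Ω2 : ℝ) (V χ ρ : M4) : Fin 3 → ℝ :=
  ![(KuC V χ ρ).re, (KnC s1m s1p W1 Λ1 ε Ω1 χ ρ).re, (KnC s2m s2p W2 Λ2 ε Ω2 χ ρ).re]

/-- Euclidean inner product on ℝ³. -/
def inner3 (x y : Fin 3 → ℝ) : ℝ := x 0 * y 0 + x 1 * y 1 + x 2 * y 2

/-- Squared Euclidean norm on ℝ³. -/
def norm3sq (x : Fin 3 → ℝ) : ℝ := inner3 x x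

/-- p_j(t) = 1 − (1/2)e^{−2εΩ_j t}. -/
def pbar (ε Ω t : ℝ) : ℝ := 1 - (1 / 2) * Real.exp (-2 * ε * Ω * t)
/-- q_j(t) = (1/2)e^{−2εΩ_j t}. -/
def qbar (ε Ω t : ℝ) : ℝ := (1 / 2) * Real.exp (-2 * ε * Ω * t)

/-- ρ̄(t) = diag(p₁p₂, p₁q₂, q₁p₂, q₁q₂): solution of the free GKSL evolution
with ρ̄(0) = (1/4)I₄. -/
def rhoBar (ε Ω1 Ω2 : ℝ) (t : ℝ) : M4 :=
  diag4 ((pbar ε Ω1 t * pbar ε Ω2 t : ℝ) : ℂ) ((pbar ε Ω1 t * qbar ε Ω2 t : ℝ) : ℂ)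
    ((qbar ε Ω1 t * pbar ε Ω2 t : ℝ) : ℂ) ((qbar ε Ω1 t * qbar ε Ω2 t : ℝ) : ℂ)

/-- g_j(t) = 1 − e^{2εΩ_j(t−T)}. -/
def gbar (ε Ω T t : ℝ) : ℝ := 1 - Real.exp (2 * ε * Ω * (t - T))

/-- χ̄(t) = diag(1, g₂, g₁, g₁g₂): solution of the adjoint system with zero
controls and χ̄(T) = diag(1,0,0,0). -/
def chiBar (ε Ω1 Ω2 T : ℝ) (t : ℝ) : M4 :=
  diag4 1 ((gbar ε Ω2 T t : ℝ) : ℂ) ((gbar ε Ω1 T t : ℝ) : ℂ)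
    ((gbar ε Ω1 T t * gbar ε Ω2 T t : ℝ) : ℂ)

attribute [local instance] Matrix.frobeniusNormedAddCommGroup Matrix.frobeniusNormedSpace

/-!
`rhoBar t` is the product state `ρ₁(t) ⊗ ρ₂(t)` with `ρⱼ(t) = diag(pⱼ(t), qⱼ(t))`. Each term of
the dissipator acts on its own tensor factor, and on a diagonal qubit state `diag(p, q)` the
amplitude-damping dissipator is `2Ω q · diag(1, -1)`, which at `(p, q) = (pⱼ, qⱼ)` is exactly
`(pⱼ', qⱼ') / ε`. The Hamiltonian part vanishes because both factors are diagonal, hence commute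
with `σ_z`, and positivity and the trace pass through the Kronecker product.
-/

theorem Matrix.sub_kronecker {α l m n p : Type*} [NonUnitalNonAssocRing α]
    (A₁ A₂ : Matrix l m α) (B : Matrix n p α) : (A₁ - A₂) ⊗ₖ B = A₁ ⊗ₖ B - A₂ ⊗ₖ B := by
  ext; simp [sub_mul]

theorem Matrix.kronecker_sub {α l m n p : Type*} [NonUnitalNonAssocRing α]
    (A : Matrix l m α) (B₁ B₂ : Matrix n p α) : A ⊗ₖ (B₁ - B₂) = A ⊗ₖ B₁ - A ⊗ₖ B₂ := by
  ext; simp [mul_sub]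

theorem Commute.kronecker {R l m : Type*} [CommSemiring R] [Fintype l] [Fintype m]
    {A A' : Matrix l l R} {B B' : Matrix m m R} (hA : Commute A A') (hB : Commute B B') :
    Commute (A ⊗ₖ B) (A' ⊗ₖ B') := by
  rw [Commute, SemiconjBy, ← mul_kronecker_mul, ← mul_kronecker_mul, hA.eq, hB.eq]

theorem HasDerivAt.kronecker {𝕜 l m n p : Type*} [RCLike 𝕜] [Fintype l] [Fintype m]
    [Fintype n] [Fintype p] {A : ℝ → Matrix l m 𝕜} {B : ℝ → Matrix n p 𝕜}
    {A' : Matrix l m 𝕜} {B' : Matrix n p 𝕜} {t : ℝ}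
    (hA : HasDerivAt A A' t) (hB : HasDerivAt B B' t) :
    HasDerivAt (fun s => A s ⊗ₖ B s) (A t ⊗ₖ B' + A' ⊗ₖ B t) t :=
  (kroneckerBilinear (R := ℝ) (α := 𝕜) (l := l) (m := m) (n := n) (p := p))
    |>.toContinuousBilinearMap.hasDerivAt_of_bilinear (fun _ => hA) (fun _ => hB)

theorem hasDerivAt_diagonal {α n : Type*} [NormedAddCommGroup α] [NormedSpace ℝ α]
    [FiniteDimensional ℝ α] [Fintype n] [DecidableEq n] {d : ℝ → n → α} {d' : n → α} {t : ℝ}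
    (h : ∀ i, HasDerivAt (d · i) (d' i) t) :
    HasDerivAt (fun s => diagonal (d s)) (diagonal d') t :=
  (diagonalLinearMap n ℝ α).toContinuousLinearMap.hasFDerivAt.comp_hasDerivAt t
    (hasDerivAt_pi.2 h)

def dampingDissipator {n : Type*} [Fintype n] (sm sp : Matrix n n ℂ) (Ω : ℝ)
    (ρ : Matrix n n ℂ) : Matrix n n ℂ :=
  (Ω : ℂ) • (2 • (sm * ρ * sp) - (sp * sm * ρ + ρ * (sp * sm)))

theorem dissJ_zero (sm sp : M4) (Ω : ℝ) (ρ : M4) :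
    dissJ sm sp Ω 0 ρ = dampingDissipator sm sp Ω ρ := by
  simp [dissJ, dampingDissipator]

section Kronecker

variable {n m : Type*} [Fintype n] [Fintype m]

theorem dampingDissipator_kronecker_one [DecidableEq m] (sm sp A : Matrix n n ℂ) (Ω : ℝ)
    (B : Matrix m m ℂ) :
    dampingDissipator (sm ⊗ₖ 1) (sp ⊗ₖ 1) Ω (A ⊗ₖ B) = dampingDissipator sm sp Ω A ⊗ₖ B := by
  simp only [dampingDissipator, ← mul_kronecker_mul, Matrix.one_mul, Matrix.mul_one,
    smul_kronecker, sub_kronecker, add_kronecker]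

theorem dampingDissipator_one_kronecker [DecidableEq n] (A : Matrix n n ℂ)
    (sm sp B : Matrix m m ℂ) (Ω : ℝ) :
    dampingDissipator (1 ⊗ₖ sm) (1 ⊗ₖ sp) Ω (A ⊗ₖ B) = A ⊗ₖ dampingDissipator sm sp Ω B := by
  simp only [dampingDissipator, ← mul_kronecker_mul, Matrix.one_mul, Matrix.mul_one,
    kronecker_smul, kronecker_sub, kronecker_add]

end Kronecker

theorem diss_zero_kronecker (Ω1 Ω2 : ℝ) (A B : Matrix (Fin 2) (Fin 2) ℂ) :
    diss Ω1 Ω2 (0, 0) (A ⊗ₖ B)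
      = dampingDissipator σm σp Ω1 A ⊗ₖ B + A ⊗ₖ dampingDissipator σm σp Ω2 B := by
  rw [diss, dissJ_zero, dissJ_zero, s1m, s1p, s2m, s2p, dampingDissipator_kronecker_one,
    dampingDissipator_one_kronecker]

theorem dampingDissipator_diagonal (Ω : ℝ) (p q : ℂ) :
    dampingDissipator σm σp Ω (diagonal ![p, q]) = diagonal ![2 * Ω * q, -(2 * Ω * q)] := by
  rw [diagonal_vec2, diagonal_vec2]
  ext i j
  fin_cases i <;> fin_cases j <;> simp [dampingDissipator, σm, σp] <;> ring

theorem σz_eq_diagonal : σz = diagonal ![1, -1] := by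
  ext i j
  fin_cases i <;> fin_cases j <;> simp [σz]

theorem H0_commute_kronecker (ω1 ω2 : ℝ) {A B : Matrix (Fin 2) (Fin 2) ℂ}
    (hA : Commute σz A) (hB : Commute σz B) : Commute (H0 ω1 ω2) (A ⊗ₖ B) :=
  (((hA.kronecker (Commute.one_left B)).smul_left _).add_left
    (((Commute.one_left A).kronecker hB).smul_left _))

def qubitRho (ε Ω t : ℝ) : Matrix (Fin 2) (Fin 2) ℂ :=
  diagonal ![(pbar ε Ω t : ℂ), (qbar ε Ω t : ℂ)]

theorem rhoBar_eq_kronecker (ε Ω1 Ω2 t : ℝ) :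
    rhoBar ε Ω1 Ω2 t = qubitRho ε Ω1 t ⊗ₖ qubitRho ε Ω2 t := by
  rw [qubitRho, qubitRho, diagonal_kronecker_diagonal, rhoBar, diag4]
  congr 1
  ext ⟨i, j⟩
  fin_cases i <;> fin_cases j <;> simp

theorem qubitRho_zero (ε Ω : ℝ) : qubitRho ε Ω 0 = (1 / 2 : ℂ) • 1 := by
  ext i j
  fin_cases i <;> fin_cases j <;> norm_num [qubitRho, pbar, qbar]

theorem hasDerivAt_qbar (ε Ω t : ℝ) :
    HasDerivAt (qbar ε Ω) (-(2 * ε * Ω) * qbar ε Ω t) t := by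
  have h := (((hasDerivAt_id t).const_mul (-2 * ε * Ω)).exp).const_mul (1 / 2 : ℝ)
  simp only [mul_one, id] at h
  exact h.congr_deriv (by rw [qbar]; ring)

theorem hasDerivAt_pbar (ε Ω t : ℝ) :
    HasDerivAt (pbar ε Ω) (2 * ε * Ω * qbar ε Ω t) t :=
  ((hasDerivAt_qbar ε Ω t).const_sub 1).congr_deriv (by ring)

theorem hasDerivAt_qubitRho (ε Ω t : ℝ) :
    HasDerivAt (qubitRho ε Ω) ((ε : ℂ) • dampingDissipator σm σp Ω (qubitRho ε Ω t)) t := by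
  rw [qubitRho, dampingDissipator_diagonal, ← diagonal_smul]
  refine hasDerivAt_diagonal fun i => ?_
  fin_cases i
  · exact (hasDerivAt_pbar ε Ω t).ofReal_comp.congr_deriv (by simp; ring)
  · exact (hasDerivAt_qbar ε Ω t).ofReal_comp.congr_deriv (by simp; ring)

theorem σz_commute_qubitRho (ε Ω t : ℝ) : Commute σz (qubitRho ε Ω t) := by
  rw [σz_eq_diagonal, qubitRho]
  exact commute_diagonal _ _

theorem qbar_nonneg (ε Ω t : ℝ) : 0 ≤ qbar ε Ω t := by
  unfold qbar
  positivity

theorem pbar_nonneg {ε Ω t : ℝ} (hεΩ : 0 ≤ ε * Ω) (ht : 0 ≤ t) : 0 ≤ pbar ε Ω t := by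
  have : Real.exp (-2 * ε * Ω * t) ≤ 1 :=
    Real.exp_le_one_iff.2 (by nlinarith [mul_nonneg hεΩ ht])
  unfold pbar
  linarith

theorem qubitRho_posSemidef {ε Ω t : ℝ} (hεΩ : 0 ≤ ε * Ω) (ht : 0 ≤ t) :
    (qubitRho ε Ω t).PosSemidef := by
  refine PosSemidef.diagonal (Pi.le_def.2 (Fin.forall_fin_two.2 ⟨?_, ?_⟩))
  · simpa using Complex.zero_le_real.2 (pbar_nonneg hεΩ ht)
  · simpa using Complex.zero_le_real.2 (qbar_nonneg ε Ω t)

theorem trace_qubitRho (ε Ω t : ℝ) : (qubitRho ε Ω t).trace = 1 := by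
  simp [qubitRho, trace_diagonal, Fin.sum_univ_two, pbar, qbar]

theorem rhoBar_zero (ε Ω1 Ω2 : ℝ) : rhoBar ε Ω1 Ω2 0 = ((1 / 4 : ℝ) : ℂ) • (1 : M4) := by
  rw [rhoBar_eq_kronecker, qubitRho_zero, qubitRho_zero, smul_kronecker, kronecker_smul,
    one_kronecker_one, smul_smul]
  norm_num

theorem hasDerivAt_rhoBar (ε Ω1 Ω2 t : ℝ) :
    HasDerivAt (rhoBar ε Ω1 Ω2) ((ε : ℂ) • diss Ω1 Ω2 (0, 0) (rhoBar ε Ω1 Ω2 t)) t := by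
  have h := (hasDerivAt_qubitRho ε Ω1 t).kronecker (hasDerivAt_qubitRho ε Ω2 t)
  rw [kronecker_smul, smul_kronecker, add_comm, ← smul_add] at h
  rw [rhoBar_eq_kronecker, diss_zero_kronecker]
  exact h.congr_of_eventuallyEq (.of_forall (rhoBar_eq_kronecker ε Ω1 Ω2))

theorem H0_commute_rhoBar (ω1 ω2 ε Ω1 Ω2 t : ℝ) : Commute (H0 ω1 ω2) (rhoBar ε Ω1 Ω2 t) := by
  rw [rhoBar_eq_kronecker]
  exact H0_commute_kronecker ω1 ω2 (σz_commute_qubitRho ε Ω1 t) (σz_commute_qubitRho ε Ω2 t)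

theorem rhoBar_posSemidef {ε Ω1 Ω2 t : ℝ} (hΩ1 : 0 ≤ ε * Ω1) (hΩ2 : 0 ≤ ε * Ω2) (ht : 0 ≤ t) :
    (rhoBar ε Ω1 Ω2 t).PosSemidef := by
  rw [rhoBar_eq_kronecker]
  exact (qubitRho_posSemidef hΩ1 ht).kronecker (qubitRho_posSemidef hΩ2 ht)

theorem trace_rhoBar (ε Ω1 Ω2 t : ℝ) : (rhoBar ε Ω1 Ω2 t).trace = 1 := by
  rw [rhoBar_eq_kronecker, trace_kronecker, trace_qubitRho, trace_qubitRho, mul_one]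

theorem rhoBar_solves_free_gksl_general
    (ω1 ω2 Ω1 Ω2 ε : ℝ)
    (hΩ1 : 0 < Ω1) (hΩ2 : 0 < Ω2) (hε : 0 < ε) :
    rhoBar ε Ω1 Ω2 0 = ((1 / 4 : ℝ) : ℂ) • (1 : M4)
      ∧ (∀ t : ℝ, HasDerivAt (rhoBar ε Ω1 Ω2)
          ((-Complex.I) • (H0 ω1 ω2 * rhoBar ε Ω1 Ω2 t - rhoBar ε Ω1 Ω2 t * H0 ω1 ω2)
            + (ε : ℂ) • diss Ω1 Ω2 (0, 0) (rhoBar ε Ω1 Ω2 t)) t)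
      ∧ (∀ t : ℝ, 0 ≤ t →
          (rhoBar ε Ω1 Ω2 t).IsHermitian ∧ (rhoBar ε Ω1 Ω2 t).PosSemidef
            ∧ Matrix.trace (rhoBar ε Ω1 Ω2 t) = 1) := by
  refine ⟨rhoBar_zero ε Ω1 Ω2, fun t => ?_, fun t ht => ?_⟩
  · rw [(H0_commute_rhoBar ω1 ω2 ε Ω1 Ω2 t).eq, sub_self, smul_zero, zero_add]
    exact hasDerivAt_rhoBar ε Ω1 Ω2 t
  · have hρ := rhoBar_posSemidef (mul_pos hε hΩ1).le (mul_pos hε hΩ2).le ht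
    exact ⟨hρ.isHermitian, hρ, trace_rhoBar ε Ω1 Ω2 t⟩

/-- ρ̄(t) = diag(p₁p₂, p₁q₂, q₁p₂, q₁q₂) satisfies ρ̄(0) = (1/4)I₄,
solves the free two-qubit GKSL master equation
ρ̄′(t) = −i[H₀, ρ̄(t)] + ε𝓛ᴰ_{(0,0)}(ρ̄(t)) for all t ∈ ℝ, and for t ≥ 0 is a
density matrix (Hermitian, positive semidefinite, trace 1). -/
theorem rhoBar_solves_free_gksl
    (ω1 ω2 Ω1 Ω2 ε : ℝ)
    (hω1 : 0 < ω1) (hω2 : 0 < ω2) (hΩ1 : 0 < Ω1) (hΩ2 : 0 < Ω2) (hε : 0 < ε) :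
    rhoBar ε Ω1 Ω2 0 = ((1 / 4 : ℝ) : ℂ) • (1 : M4)
      ∧ (∀ t : ℝ, HasDerivAt (rhoBar ε Ω1 Ω2)
          ((-Complex.I) • (H0 ω1 ω2 * rhoBar ε Ω1 Ω2 t - rhoBar ε Ω1 Ω2 t * H0 ω1 ω2)
            + (ε : ℂ) • diss Ω1 Ω2 (0, 0) (rhoBar ε Ω1 Ω2 t)) t)
      ∧ (∀ t : ℝ, 0 ≤ t →
          (rhoBar ε Ω1 Ω2 t).IsHermitian ∧ (rhoBar ε Ω1 Ω2 t).PosSemidef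
            ∧ Matrix.trace (rhoBar ε Ω1 Ω2 t) = 1) :=
  rhoBar_solves_free_gksl_general ω1 ω2 Ω1 Ω2 ε hΩ1 hΩ2 hε

end
end

section
/- Fix T > 0. Let ρ̄(t) := diag(p₁(t)p₂(t), p₁(t)q₂(t), q₁(t)p₂(t), q₁(t)q₂(t)) with p_j(t) = 1 − (1/2)e^{−2εΩ_j t}, q_j(t) = (1/2)e^{−2εΩ_j t}, and let χ̄(t) := diag(1, g₂(t), g₁(t), g₁(t)g₂(t)) with g_j(t) = 1 − e^{2εΩ_j(t−T)}. Then for every t ∈ [0,T] and j = 1,2, the incoherent switching functions are nonpositive: 𝒦ⁿʲ(χ̄(t), ρ̄(t)) ≤ 0. -/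
open Matrix Kronecker Complex
open scoped ComplexOrder

noncomputable section

attribute [local instance] Matrix.frobeniusNormedAddCommGroup Matrix.frobeniusNormedSpace

set_option maxHeartbeats 1000000 in
private lemma Kval1 (Λ ε Ω1 Ω2 T t : ℝ) :
    KnC s1m s1p W1 Λ ε Ω1 (chiBar ε Ω1 Ω2 T t) (rhoBar ε Ω1 Ω2 t) =
      ((2*ε*Ω1*((qbar ε Ω1 t - pbar ε Ω1 t)*(1 - gbar ε Ω1 T t)*(pbar ε Ω2 t + gbar ε Ω2 T t * qbar ε Ω2 t)) : ℝ) : ℂ) := by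
  simp [chiBar, rhoBar, KnC, hsInner, s1m, s1p, W1, σm, σp, σz, diag4, Matrix.trace,
    Matrix.mul_apply, Matrix.diagonal, Matrix.kroneckerMap_apply, Fin.sum_univ_two,
    Matrix.conjTranspose_apply, Fintype.sum_prod_type, Matrix.smul_apply, two_smul,
    Prod.mk.injEq, Prod.ext_iff, Complex.conj_ofReal]
  ring

set_option maxHeartbeats 1000000 in
private lemma Kval2 (Λ ε Ω1 Ω2 T t : ℝ) :
    KnC s2m s2p W2 Λ ε Ω2 (chiBar ε Ω1 Ω2 T t) (rhoBar ε Ω1 Ω2 t) =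
      ((2*ε*Ω2*((qbar ε Ω2 t - pbar ε Ω2 t)*(1 - gbar ε Ω2 T t)*(pbar ε Ω1 t + gbar ε Ω1 T t * qbar ε Ω1 t)) : ℝ) : ℂ) := by
  simp [chiBar, rhoBar, KnC, hsInner, s2m, s2p, W2, σm, σp, σz, diag4, Matrix.trace,
    Matrix.mul_apply, Matrix.diagonal, Matrix.kroneckerMap_apply, Fin.sum_univ_two,
    Matrix.conjTranspose_apply, Fintype.sum_prod_type, Matrix.smul_apply, two_smul,
    Prod.mk.injEq, Prod.ext_iff, Complex.conj_ofReal]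
  ring

private lemma factor_nonpos {ε Ω Ω' T t : ℝ} (hΩ : 0 < Ω) (hΩ' : 0 < Ω') (hε : 0 < ε)
    (ht0 : 0 ≤ t) (htT : t ≤ T) :
    2*ε*Ω*((qbar ε Ω t - pbar ε Ω t)*(1 - gbar ε Ω T t)*(pbar ε Ω' t + gbar ε Ω' T t * qbar ε Ω' t)) ≤ 0 := by
  have h1 : qbar ε Ω t - pbar ε Ω t ≤ 0 := by
    have : Real.exp (-2 * ε * Ω * t) ≤ 1 := by
      apply Real.exp_le_one_iff.mpr
      nlinarith [mul_nonneg (mul_nonneg hε.le hΩ.le) ht0]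
    simp only [qbar, pbar]; nlinarith
  have h2 : (0:ℝ) < 1 - gbar ε Ω T t := by
    simp only [gbar]; have := Real.exp_pos (2 * ε * Ω * (t - T)); linarith
  have h3 : 0 ≤ pbar ε Ω' t + gbar ε Ω' T t * qbar ε Ω' t := by
    have hq : 0 ≤ qbar ε Ω' t := by
      simp only [qbar]; positivity
    have hp : (0:ℝ) ≤ pbar ε Ω' t := by
      have : Real.exp (-2 * ε * Ω' * t) ≤ 1 := by
        apply Real.exp_le_one_iff.mpr
        nlinarith [mul_nonneg (mul_nonneg hε.le hΩ'.le) ht0]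
      simp only [pbar]; linarith
    have hg : 0 ≤ gbar ε Ω' T t := by
      have : Real.exp (2 * ε * Ω' * (t - T)) ≤ 1 := by
        apply Real.exp_le_one_iff.mpr
        nlinarith [mul_nonneg (mul_nonneg hε.le hΩ'.le) (sub_nonneg.2 htT)]
      simp only [gbar]; linarith
    nlinarith
  have hX : (qbar ε Ω t - pbar ε Ω t) * (1 - gbar ε Ω T t) * (pbar ε Ω' t + gbar ε Ω' T t * qbar ε Ω' t) ≤ 0 :=
    mul_nonpos_of_nonpos_of_nonneg (mul_nonpos_of_nonpos_of_nonneg h1 h2.le) h3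
  have h2ε : (0:ℝ) ≤ 2 * ε * Ω := by positivity
  exact mul_nonpos_of_nonneg_of_nonpos h2ε hX

/-- along the diagonal trajectories ρ̄ and χ̄, the incoherent
switching functions are real and nonpositive on [0,T]:
𝒦ⁿʲ(χ̄(t), ρ̄(t)) ≤ 0 for j = 1,2. -/
theorem incoherent_switching_functions_nonpos
    (Λ1 Λ2 Ω1 Ω2 ε : ℝ)
    (hΛ1 : 0 < Λ1) (hΛ2 : 0 < Λ2) (hΩ1 : 0 < Ω1) (hΩ2 : 0 < Ω2) (hε : 0 < ε)
    (T : ℝ) (hT : 0 < T) (t : ℝ) (ht : t ∈ Set.Icc (0 : ℝ) T) :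
    ((KnC s1m s1p W1 Λ1 ε Ω1 (chiBar ε Ω1 Ω2 T t) (rhoBar ε Ω1 Ω2 t)).im = 0
        ∧ (KnC s1m s1p W1 Λ1 ε Ω1 (chiBar ε Ω1 Ω2 T t) (rhoBar ε Ω1 Ω2 t)).re ≤ 0)
      ∧ ((KnC s2m s2p W2 Λ2 ε Ω2 (chiBar ε Ω1 Ω2 T t) (rhoBar ε Ω1 Ω2 t)).im = 0
        ∧ (KnC s2m s2p W2 Λ2 ε Ω2 (chiBar ε Ω1 Ω2 T t) (rhoBar ε Ω1 Ω2 t)).re ≤ 0) := by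
  obtain ⟨ht0, htT⟩ := ht
  refine ⟨⟨?_, ?_⟩, ?_, ?_⟩
  · rw [Kval1]; simp
  · rw [Kval1]; simpa using factor_nonpos hΩ1 hΩ2 hε ht0 htT
  · rw [Kval2]; simp
  · rw [Kval2]; simpa using factor_nonpos hΩ2 hΩ1 hε ht0 htT

end
end

section
/- Fix T > 0 and bounds μ > 0, n_max > 0. Let ρ̄(t) := diag(p₁(t)p₂(t), p₁(t)q₂(t), q₁(t)p₂(t), q₁(t)q₂(t)) with p_j(t) = 1 − (1/2)e^{−2εΩ_j t}, q_j(t) = (1/2)e^{−2εΩ_j t}, and let χ̄(t) := diag(1, g₂(t), g₁(t), g₁(t)g₂(t)) with g_j(t) = 1 − e^{2εΩ_j(t−T)}. Then for every t ∈ [0,T]: the maximum of u ↦ 𝒦ᵘ(χ̄(t),ρ̄(t))·u over u ∈ [−μ,μ] equals 0 and is attained at u = 0, and for j = 1,2 the maximum of n ↦ 𝒦ⁿʲ(χ̄(t),ρ̄(t))·n over n ∈ [0,n_max] equals 0 and is attained at n = 0. In other words, the zero control c = (0,0,0) satisfies the pointwise maximum conditions of the Pontryagin maximum principle for the problem of maximizing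 the overlap ⟨ρ(T), diag(1,0,0,0)⟩ with ρ₀ = (1/4)I₄, for any admissible values of the parameters and any interaction matrix V. -/
open Matrix Kronecker Complex
open scoped ComplexOrder

noncomputable section

attribute [local instance] Matrix.frobeniusNormedAddCommGroup Matrix.frobeniusNormedSpace

lemma two_apply_eq (i : Fin 2 × Fin 2) : ((2:M4) i i) = 2 := by
  rw [show (2:M4) = (1:M4)+(1:M4) from (one_add_one_eq_two).symm]
  simp [Matrix.one_apply]; norm_num

lemma KuC_diag_eval (V : M4) (a b c d x y z w : ℝ) :
    (KuC V (diag4 (a:ℂ) b c d) (diag4 (x:ℂ) y z w)).re = 0 := by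
  simp [KuC, hsInner, diag4, Matrix.trace, Matrix.diag, Matrix.mul_apply,
    Matrix.diagonal, Fintype.sum_prod_type, Fin.sum_univ_succ, Matrix.conjTranspose_apply,
    Prod.ext_iff]
  ring

lemma Kn1_diag_eval (Λ ε Ω : ℝ) (a b c d x y z w : ℝ) :
    (KnC s1m s1p W1 Λ ε Ω (diag4 (a:ℂ) b c d) (diag4 (x:ℂ) y z w)).re
      = ε * Ω * (2*((z - x)*(a - c) + (w - y)*(b - d))) := by
  simp [KnC, hsInner, diag4, s1m, s1p, W1, σm, σp, σz, Matrix.trace, Matrix.diag,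
    Matrix.mul_apply, Matrix.kroneckerMap_apply, two_nsmul,
    Matrix.diagonal, Fintype.sum_prod_type, Fin.sum_univ_succ, Matrix.conjTranspose_apply,
    Matrix.one_apply, Prod.ext_iff, two_apply_eq]
  ring

lemma Kn2_diag_eval (Λ ε Ω : ℝ) (a b c d x y z w : ℝ) :
    (KnC s2m s2p W2 Λ ε Ω (diag4 (a:ℂ) b c d) (diag4 (x:ℂ) y z w)).re
      = ε * Ω * (2*((y - x)*(a - b) + (w - z)*(c - d))) := by
  simp [KnC, hsInner, diag4, s2m, s2p, W2, σm, σp, σz, Matrix.trace, Matrix.diag,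
    Matrix.mul_apply, Matrix.kroneckerMap_apply, two_nsmul,
    Matrix.diagonal, Fintype.sum_prod_type, Fin.sum_univ_succ, Matrix.conjTranspose_apply,
    Matrix.one_apply, Prod.ext_iff, two_apply_eq]
  ring
/-- the zero control satisfies the pointwise maximum conditions of
the Pontryagin maximum principle along ρ̄, χ̄: for every t ∈ [0,T], u = 0
maximizes u ↦ 𝒦ᵘ(χ̄(t),ρ̄(t))·u over [−μ,μ] (with maximal value 0, since the
function vanishes at 0) and, for j = 1,2, n = 0 maximizes
n ↦ 𝒦ⁿʲ(χ̄(t),ρ̄(t))·n over [0,n_max] (with maximal value 0). -/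
theorem zero_control_satisfies_PMP
    (Λ1 Λ2 Ω1 Ω2 ε : ℝ)
    (hΛ1 : 0 < Λ1) (hΛ2 : 0 < Λ2) (hΩ1 : 0 < Ω1) (hΩ2 : 0 < Ω2) (hε : 0 < ε)
    (T μ nmax : ℝ) (hT : 0 < T) (hμ : 0 < μ) (hnmax : 0 < nmax)
    (V : M4) (t : ℝ) (ht : t ∈ Set.Icc (0 : ℝ) T) :
    ((0 : ℝ) ∈ Set.Icc (-μ) μ
        ∧ IsMaxOn (fun u : ℝ => (KuC V (chiBar ε Ω1 Ω2 T t) (rhoBar ε Ω1 Ω2 t)).re * u)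
            (Set.Icc (-μ) μ) 0
        ∧ (KuC V (chiBar ε Ω1 Ω2 T t) (rhoBar ε Ω1 Ω2 t)).re * (0 : ℝ) = 0)
      ∧ ((0 : ℝ) ∈ Set.Icc (0 : ℝ) nmax
        ∧ IsMaxOn
            (fun n : ℝ =>
              (KnC s1m s1p W1 Λ1 ε Ω1 (chiBar ε Ω1 Ω2 T t) (rhoBar ε Ω1 Ω2 t)).re * n)
            (Set.Icc (0 : ℝ) nmax) 0
        ∧ (KnC s1m s1p W1 Λ1 ε Ω1 (chiBar ε Ω1 Ω2 T t) (rhoBar ε Ω1 Ω2 t)).re * (0 : ℝ) = 0)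
      ∧ ((0 : ℝ) ∈ Set.Icc (0 : ℝ) nmax
        ∧ IsMaxOn
            (fun n : ℝ =>
              (KnC s2m s2p W2 Λ2 ε Ω2 (chiBar ε Ω1 Ω2 T t) (rhoBar ε Ω1 Ω2 t)).re * n)
            (Set.Icc (0 : ℝ) nmax) 0
        ∧ (KnC s2m s2p W2 Λ2 ε Ω2 (chiBar ε Ω1 Ω2 T t) (rhoBar ε Ω1 Ω2 t)).re * (0 : ℝ) = 0) := by
  obtain ⟨ht0, htT⟩ := ht
  have he1 : Real.exp (-2*ε*Ω1*t) ≤ 1 := Real.exp_le_one_iff.mpr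
    (by nlinarith [mul_nonneg (mul_nonneg hε.le hΩ1.le) ht0])
  have he2 : Real.exp (-2*ε*Ω2*t) ≤ 1 := Real.exp_le_one_iff.mpr
    (by nlinarith [mul_nonneg (mul_nonneg hε.le hΩ2.le) ht0])
  have hE1 : Real.exp (2*ε*Ω1*(t-T)) ≤ 1 := Real.exp_le_one_iff.mpr
    (by nlinarith [mul_nonneg (mul_nonneg hε.le hΩ1.le) (sub_nonneg.mpr htT)])
  have hE2 : Real.exp (2*ε*Ω2*(t-T)) ≤ 1 := Real.exp_le_one_iff.mpr
    (by nlinarith [mul_nonneg (mul_nonneg hε.le hΩ2.le) (sub_nonneg.mpr htT)])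
  have p1 := Real.exp_pos (-2*ε*Ω1*t)
  have p2 := Real.exp_pos (-2*ε*Ω2*t)
  have P1 := Real.exp_pos (2*ε*Ω1*(t-T))
  have P2 := Real.exp_pos (2*ε*Ω2*(t-T))
  have hone : (1:ℂ) = ((1:ℝ):ℂ) := Complex.ofReal_one.symm
  have hKu : (KuC V (chiBar ε Ω1 Ω2 T t) (rhoBar ε Ω1 Ω2 t)).re = 0 := by
    rw [chiBar, rhoBar, hone, KuC_diag_eval]
  have hK1 : (KnC s1m s1p W1 Λ1 ε Ω1 (chiBar ε Ω1 Ω2 T t) (rhoBar ε Ω1 Ω2 t)).re ≤ 0 := by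
    rw [chiBar, rhoBar, hone, Kn1_diag_eval]
    unfold pbar qbar gbar
    set e1 := Real.exp (-2*ε*Ω1*t)
    set e2 := Real.exp (-2*ε*Ω2*t)
    set E1 := Real.exp (2*ε*Ω1*(t-T))
    set E2 := Real.exp (2*ε*Ω2*(t-T))
    have key : (1/2*e1 - (1 - 1/2*e1)) * ((1 - 1/2*e2) + 1/2*e2*(1-E2)) * E1 ≤ 0 := by
      apply mul_nonpos_of_nonpos_of_nonneg _ P1.le
      apply mul_nonpos_of_nonpos_of_nonneg (by nlinarith)
      nlinarith
    nlinarith [mul_pos hε hΩ1, mul_nonneg (mul_nonneg hε.le hΩ1.le) (neg_nonneg.mpr key)]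
  have hK2 : (KnC s2m s2p W2 Λ2 ε Ω2 (chiBar ε Ω1 Ω2 T t) (rhoBar ε Ω1 Ω2 t)).re ≤ 0 := by
    rw [chiBar, rhoBar, hone, Kn2_diag_eval]
    unfold pbar qbar gbar
    set e1 := Real.exp (-2*ε*Ω1*t)
    set e2 := Real.exp (-2*ε*Ω2*t)
    set E1 := Real.exp (2*ε*Ω1*(t-T))
    set E2 := Real.exp (2*ε*Ω2*(t-T))
    have key : (1/2*e2 - (1 - 1/2*e2)) * ((1 - 1/2*e1) + 1/2*e1*(1-E1)) * E2 ≤ 0 := by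
      apply mul_nonpos_of_nonpos_of_nonneg _ P2.le
      apply mul_nonpos_of_nonpos_of_nonneg (by nlinarith)
      nlinarith
    nlinarith [mul_pos hε hΩ2, mul_nonneg (mul_nonneg hε.le hΩ2.le) (neg_nonneg.mpr key)]
  refine ⟨⟨⟨by linarith, hμ.le⟩, ?_, by ring⟩,
    ⟨⟨le_refl 0, hnmax.le⟩, ?_, by ring⟩, ⟨⟨le_refl 0, hnmax.le⟩, ?_, by ring⟩⟩
  · intro u hu
    simp only [Set.mem_setOf_eq, hKu, zero_mul, le_refl]
  · intro n hn
    simp only [Set.mem_setOf_eq, mul_zero]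
    exact mul_nonpos_of_nonpos_of_nonneg hK1 hn.1
  · intro n hn
    simp only [Set.mem_setOf_eq, mul_zero]
    exact mul_nonpos_of_nonpos_of_nonneg hK2 hn.1

end
end
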